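/- Fix an integer L ≥ 2 and consider Cubic Code 3 on the torus (ZMod L)³. Every nontrivial logical operator of Code 3 has support of size at least L. -/

import Mathlib

namespace CubicCode3Torus

/-- Sites of the discrete torus `(ZMod L)³`. -/
abbrev Site (L : ℕ) := ZMod L × ZMod L × ZMod L

/-- A CSS Pauli operator (mod phase): a pair `(vX, vZ)` of functions `Site L → F₂ × F₂`
(two qubits per site). -/
abbrev Pauli (L : ℕ) := (Site L → ZMod 2 × ZMod 2) × (Site L → ZMod 2 × ZMod 2)

/-- The commutation pairing `⟨v,w⟩ = Σ_s (vX(s)·wZ(s) + vZ(s)·wX(s))`. -/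
def pairing (L : ℕ) [NeZero L] (v w : Pauli L) : ZMod 2 :=
  ∑ s : Site L,
    ((v.1 s).1 * (w.2 s).1 + (v.1 s).2 * (w.2 s).2 +
     (v.2 s).1 * (w.1 s).1 + (v.2 s).2 * (w.1 s).2)

/-- The Z-corner table of Cubic Code 3. -/
def z : Bool × Bool × Bool → ZMod 2 × ZMod 2
  | (false, false, false) => (0, 1)
  | (true,  false, false) => (1, 1)
  | (false, true,  false) => (1, 1)
  | (true,  true,  false) => (1, 0)
  | (false, false, true)  => (0, 1)
  | (true,  false, true)  => (0, 0)
  | (false, true,  true)  => (0, 1)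
  | (true,  true,  true)  => (1, 1)

/-- Embedding of a corner coordinate `{0,1}` into `ZMod L`. -/
def emb (L : ℕ) (b : Bool) : ZMod L := if b then 1 else 0

/-- The site `p + c` for a corner `c ∈ {0,1}³`. -/
def cellSite (L : ℕ) (p : Site L) (c : Bool × Bool × Bool) : Site L :=
  (p.1 + emb L c.1, p.2.1 + emb L c.2.1, p.2.2 + emb L c.2.2)

/-- `ζ_p`: the Z-part of the Z-type generator at `p`. -/
def zeta (L : ℕ) [NeZero L] (p : Site L) : Site L → ZMod 2 × ZMod 2 :=
  fun s => ∑ c : Bool × Bool × Bool, if s = cellSite L p c then z c else 0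

/-- `ξ_p`: the X-part of the X-type generator at `p`, `ξ_p(p+c) = σ(z((1,1,1)−c))`. -/
def xi (L : ℕ) [NeZero L] (p : Site L) : Site L → ZMod 2 × ZMod 2 :=
  fun s => ∑ c : Bool × Bool × Bool,
    if s = cellSite L p c then
      ((z (!c.1, !c.2.1, !c.2.2)).2, (z (!c.1, !c.2.1, !c.2.2)).1) else 0

/-- The Z-type generator `g_p = (0, ζ_p)`. -/
def gZ (L : ℕ) [NeZero L] (p : Site L) : Pauli L := (0, zeta L p)

/-- The X-type generator `f_p = (ξ_p, 0)`. -/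
def fX (L : ℕ) [NeZero L] (p : Site L) : Pauli L := (xi L p, 0)

/-- The stabilizer subspace: the `F₂`-span of all generators. -/
def stab (L : ℕ) [NeZero L] : Submodule (ZMod 2) (Pauli L) :=
  Submodule.span (ZMod 2) {v : Pauli L | ∃ p : Site L, v = gZ L p ∨ v = fX L p}

/-- The support of a Pauli operator. -/
def support (L : ℕ) (v : Pauli L) : Set (Site L) := {s | v.1 s ≠ 0 ∨ v.2 s ≠ 0}

end CubicCode3Torus

/-!
Write each half `(a, b)` of a Pauli operator as a pair of elements of the group algebra
`F₂[(ZMod L)³]`. Commuting with every Z-type generator says exactly `a·Ψ = b·Φ`, where `(Φ, Ψ)`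
are the corner polynomials of the X-type generator, and symmetrically for the other half. Both
pairs of corner polynomials are coprime in `F₂[x, y, z]` (as linear polynomials in `x` they have
a nonzero resultant and one of them is primitive).

If the support has fewer than `L` sites, then in each coordinate direction some plane misses it.
After a translation, `a` and `b` lift to polynomials of degree at most `L - 2` in each variable,
so `a·Ψ = b·Φ` already holds in `F₂[x, y, z]`: no wrap-around occurs. Coprimality gives
`a = h·Φ` and `b = h·Ψ`, i.e. the half is a combination of generators, so the operator lies in
the stabilizer.
-/

lemma ZMod.val_add_one_lt_of_ne_neg_one {n : ℕ} [NeZero n] {x : ZMod n} (hx : x ≠ -1) :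
    x.val + 1 < n := by
  refine lt_of_le_of_ne (ZMod.val_lt x) fun h => hx ?_
  have h0 : ((x.val + 1 : ℕ) : ZMod n) = 0 := by rw [h, ZMod.natCast_self]
  rwa [Nat.cast_succ, ZMod.natCast_zmod_val, ← eq_neg_iff_add_eq_zero] at h0

theorem IsRelPrime.exists_eq_mul_of_mul_eq {α : Type*} [CommMonoidWithZero α] [IsCancelMulZero α]
    [DecompositionMonoid α] {x y a b : α} (hxy : IsRelPrime x y) (h : a * y = b * x) :
    ∃ c, a = c * x ∧ b = c * y := by
  obtain ⟨c, rfl⟩ := hxy.dvd_of_dvd_mul_right ⟨b, by rw [h, mul_comm]⟩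
  rcases eq_or_ne x 0 with rfl | hx
  · obtain ⟨y, rfl⟩ := isRelPrime_zero_left.mp hxy
    exact ⟨b * ↑y⁻¹, by simp, by simp⟩
  · exact ⟨c, mul_comm x c, mul_left_cancel₀ hx (by rw [mul_comm x b, ← h, mul_assoc])⟩

open Polynomial in
theorem Polynomial.isRelPrime_C_mul_X_add_C {A : Type*} [CommRing A] [IsDomain A] {α β γ δ : A}
    (hαβ : IsCoprime α β) (hres : α * δ - β * γ ≠ 0) :
    IsRelPrime (C α * X + C β) (C γ * X + C δ) := by
  intro k hkf hkg
  have hk : k ∣ C (α * δ - β * γ) := by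
    have : C (α * δ - β * γ) = C α * (C γ * X + C δ) - C γ * (C α * X + C β) := by
      simp only [map_sub, map_mul]; ring
    rw [this]
    exact dvd_sub (hkg.mul_left _) (hkf.mul_left _)
  have hk0 : k = C (k.coeff 0) := eq_C_of_degree_le_zero
    ((degree_le_of_dvd hk (C_ne_zero.mpr hres)).trans degree_C_le)
  rw [hk0, C_dvd_iff_dvd_coeff] at hkf
  rw [hk0]
  exact (hαβ.isUnit_of_dvd' (by simpa using hkf 1) (by simpa using hkf 0)).map C

theorem Set.exists_forall_ne_of_ncard_lt {α β : Type*} [Finite α] [Fintype β] (f : α → β)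
    {S : Set α} (hS : S.ncard < Fintype.card β) : ∃ b, ∀ s ∈ S, f s ≠ b := by
  by_contra! h
  have himage : f '' S = Set.univ := Set.eq_univ_of_forall fun b => by
    obtain ⟨s, hs, rfl⟩ := h b
    exact ⟨s, hs, rfl⟩
  have := Set.ncard_image_le (f := f) (Set.toFinite S)
  rw [himage, Set.ncard_univ, Nat.card_eq_fintype_card] at this
  omega

namespace CubicCode3Torus

open MvPolynomial

section TorusRing

variable {K : Type*} [Field K] {L : ℕ}

def expToSite (L : ℕ) : (Fin 3 →₀ ℕ) →+ Site L where
  toFun m := (m 0, m 1, m 2)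
  map_zero' := by simp
  map_add' m m' := by simp

lemma expToSite_injOn : Set.InjOn (expToSite L) {m | ∀ i, m i < L} := by
  intro m hm m' hm' h
  have hcast (i : Fin 3) (hi : (m i : ZMod L) = m' i) : m i = m' i := by
    simpa [ZMod.val_natCast_of_lt (hm i), ZMod.val_natCast_of_lt (hm' i)] using congrArg ZMod.val hi
  simp only [expToSite, AddMonoidHom.coe_mk, ZeroHom.coe_mk, Prod.mk.injEq] at h
  ext i
  fin_cases i
  exacts [hcast 0 h.1, hcast 1 h.2.1, hcast 2 h.2.2]

variable (K L) in
noncomputable def toTorus : MvPolynomial (Fin 3) K →+* AddMonoidAlgebra K (Site L) :=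
  AddMonoidAlgebra.mapDomainRingHom K (expToSite L)

lemma toTorus_injOn : Set.InjOn (toTorus K L) {P | ∀ m ∈ P.support, ∀ i, m i < L} := by
  intro P hP Q hQ h
  exact AddMonoidAlgebra.coeff_injective <| Finsupp.mapDomain_injOn _ expToSite_injOn
    (fun m hm => hP m hm) (fun m hm => hQ m hm) (congrArg AddMonoidAlgebra.coeff h)

lemma lt_of_mem_support_mul {P Θ : MvPolynomial (Fin 3) K}
    (hP : ∀ m ∈ P.support, ∀ i, m i + 1 < L) (hΘ : Θ ∈ restrictDegree (Fin 3) K 1) :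
    ∀ m ∈ (P * Θ).support, ∀ i, m i < L := by
  classical
  intro m hm i
  obtain ⟨m₁, hm₁, m₂, hm₂, rfl⟩ := Finset.mem_add.mp (support_mul P Θ hm)
  have := (mem_restrictDegree _ _ _).mp hΘ m₂ hm₂ i
  have := hP m₁ hm₁ i
  simp only [Finsupp.coe_add, Pi.add_apply]
  omega

def offPlanes (q : Site L) : Set (Site L) := {s | s.1 ≠ q.1 ∧ s.2.1 ≠ q.2.1 ∧ s.2.2 ≠ q.2.2}

lemma add_mem_offPlanes_add {q s : Site L} (t : Site L) (hs : s ∈ offPlanes q) :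
    s + t ∈ offPlanes (q + t) := by
  simpa [offPlanes] using hs

variable [NeZero L]

noncomputable def siteToExp (s : Site L) : Fin 3 →₀ ℕ :=
  Finsupp.equivFunOnFinite.symm ![s.1.val, s.2.1.val, s.2.2.val]

lemma expToSite_siteToExp (s : Site L) : expToSite L (siteToExp s) = s := by
  simp [expToSite, siteToExp]

lemma siteToExp_add_one_lt {s : Site L} (hs : s ∈ offPlanes (-1)) (i : Fin 3) :
    siteToExp s i + 1 < L := by
  obtain ⟨h1, h2, h3⟩ := hs
  fin_cases i
  · exact ZMod.val_add_one_lt_of_ne_neg_one h1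
  · exact ZMod.val_add_one_lt_of_ne_neg_one h2
  · exact ZMod.val_add_one_lt_of_ne_neg_one h3

noncomputable def liftTorus (x : AddMonoidAlgebra K (Site L)) : MvPolynomial (Fin 3) K :=
  AddMonoidAlgebra.mapDomain siteToExp x

lemma toTorus_liftTorus (x : AddMonoidAlgebra K (Site L)) : toTorus K L (liftTorus x) = x := by
  apply AddMonoidAlgebra.coeff_injective
  change Finsupp.mapDomain (expToSite L) (Finsupp.mapDomain siteToExp x.coeff) = x.coeff
  rw [← Finsupp.mapDomain_comp, show expToSite L ∘ siteToExp = id from funext expToSite_siteToExp,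
    Finsupp.mapDomain_id]

lemma liftTorus_support_add_one_lt {x : AddMonoidAlgebra K (Site L)}
    (hx : (x.coeff.support : Set (Site L)) ⊆ offPlanes (-1)) :
    ∀ m ∈ (liftTorus x).support, ∀ i, m i + 1 < L := by
  classical
  intro m hm i
  obtain ⟨s, hs, rfl⟩ := Finset.mem_image.mp (Finsupp.mapDomain_support hm)
  exact siteToExp_add_one_lt (hx hs) i

theorem exists_eq_mul_of_mul_eq_of_subset_offPlanes_neg_one {Φ Ψ : MvPolynomial (Fin 3) K}
    (hΦΨ : IsRelPrime Φ Ψ) (hΦ : Φ ∈ restrictDegree (Fin 3) K 1)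
    (hΨ : Ψ ∈ restrictDegree (Fin 3) K 1) {a b : AddMonoidAlgebra K (Site L)}
    (ha : (a.coeff.support : Set (Site L)) ⊆ offPlanes (-1))
    (hb : (b.coeff.support : Set (Site L)) ⊆ offPlanes (-1))
    (hab : a * toTorus K L Ψ = b * toTorus K L Φ) :
    ∃ c, a = c * toTorus K L Φ ∧ b = c * toTorus K L Ψ := by
  have hlift : liftTorus a * Ψ = liftTorus b * Φ :=
    toTorus_injOn (lt_of_mem_support_mul (liftTorus_support_add_one_lt ha) hΨ)
      (lt_of_mem_support_mul (liftTorus_support_add_one_lt hb) hΦ)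
      (by simp only [map_mul, toTorus_liftTorus, hab])
  obtain ⟨c, hac, hbc⟩ := hΦΨ.exists_eq_mul_of_mul_eq hlift
  refine ⟨toTorus K L c, ?_, ?_⟩
  · rw [← toTorus_liftTorus a, hac, map_mul]
  · rw [← toTorus_liftTorus b, hbc, map_mul]

open AddMonoidAlgebra in
theorem exists_eq_mul_of_mul_eq_of_subset_offPlanes {Φ Ψ : MvPolynomial (Fin 3) K}
    (hΦΨ : IsRelPrime Φ Ψ) (hΦ : Φ ∈ restrictDegree (Fin 3) K 1)
    (hΨ : Ψ ∈ restrictDegree (Fin 3) K 1) {a b : AddMonoidAlgebra K (Site L)} (q : Site L)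
    (ha : (a.coeff.support : Set (Site L)) ⊆ offPlanes q)
    (hb : (b.coeff.support : Set (Site L)) ⊆ offPlanes q)
    (hab : a * toTorus K L Ψ = b * toTorus K L Φ) :
    ∃ c, a = c * toTorus K L Φ ∧ b = c * toTorus K L Ψ := by
  set t : Site L := -1 - q
  have hshift : ∀ x : AddMonoidAlgebra K (Site L),
      (x.coeff.support : Set (Site L)) ⊆ offPlanes q →
      ((single t 1 * x).coeff.support : Set (Site L)) ⊆ offPlanes (-1) := by
    intro x hx s hs
    have h := add_mem_offPlanes_add t (hx (by simpa [coeff_single_mul_apply] using hs))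
    rwa [neg_add_cancel_comm, add_sub_cancel] at h
  obtain ⟨c, hac, hbc⟩ := exists_eq_mul_of_mul_eq_of_subset_offPlanes_neg_one hΦΨ hΦ hΨ
    (hshift a ha) (hshift b hb) (by rw [mul_assoc, mul_assoc, hab])
  have hcancel (x : AddMonoidAlgebra K (Site L)) : single (-t) 1 * (single t 1 * x) = x := by
    rw [← mul_assoc, single_mul_single, neg_add_cancel, mul_one, ← AddMonoidAlgebra.one_def,
      one_mul]
  exact ⟨single (-t) 1 * c, by rw [← hcancel a, hac, mul_assoc],
    by rw [← hcancel b, hbc, mul_assoc]⟩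

end TorusRing

section Corners

variable {K : Type*} [Field K] {L : ℕ}

def oppCorner (c : Bool × Bool × Bool) : Bool × Bool × Bool := (!c.1, !c.2.1, !c.2.2)

lemma oppCorner_involutive : Function.Involutive oppCorner := fun c => by simp [oppCorner]

noncomputable def cornerExp (c : Bool × Bool × Bool) : Fin 3 →₀ ℕ :=
  Finsupp.single 0 c.1.toNat + Finsupp.single 1 c.2.1.toNat + Finsupp.single 2 c.2.2.toNat

lemma monomial_cornerExp (c : Bool × Bool × Bool) (r : K) :
    monomial (cornerExp c) r = C r * X 0 ^ c.1.toNat * X 1 ^ c.2.1.toNat * X 2 ^ c.2.2.toNat := by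
  simp only [cornerExp, X_pow_eq_monomial, C_apply, monomial_mul, zero_add, mul_one]

noncomputable def cornerPoly (τ : Bool × Bool × Bool → K) : MvPolynomial (Fin 3) K :=
  ∑ c, monomial (cornerExp c) (τ c)

lemma cornerPoly_mem_restrictDegree (τ : Bool × Bool × Bool → K) :
    cornerPoly τ ∈ restrictDegree (Fin 3) K 1 :=
  Submodule.sum_mem _ fun c _ => (mem_restrictDegree _ _ _).mpr fun m hm i => by
    classical
    rw [Finset.mem_singleton.mp (support_monomial_subset hm)]
    fin_cases i <;> simp [cornerExp, Bool.toNat_le]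

def dualTable {M : Type*} (τ : Bool × Bool × Bool → M × M) : Bool × Bool × Bool → M × M :=
  fun c => (τ (oppCorner c)).swap

lemma dualTable_dualTable {M : Type*} (τ : Bool × Bool × Bool → M × M) :
    dualTable (dualTable τ) = τ := by
  funext c
  simp [dualTable, oppCorner_involutive c]

end Corners

section Cells

variable {K : Type*} [Field K] {L : ℕ}

def corner (L : ℕ) (c : Bool × Bool × Bool) : Site L := (emb L c.1, emb L c.2.1, emb L c.2.2)

lemma cellSite_eq_add (p : Site L) (c : Bool × Bool × Bool) : cellSite L p c = p + corner L c :=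
  rfl

lemma expToSite_cornerExp (c : Bool × Bool × Bool) : expToSite L (cornerExp c) = corner L c := by
  obtain ⟨b₁, b₂, b₃⟩ := c
  cases b₁ <;> cases b₂ <;> cases b₃ <;> simp [expToSite, cornerExp, corner, emb]

lemma corner_add_corner_oppCorner (c : Bool × Bool × Bool) :
    corner L c + corner L (oppCorner c) = 1 := by
  obtain ⟨b₁, b₂, b₃⟩ := c
  cases b₁ <;> cases b₂ <;> cases b₃ <;> simp [corner, oppCorner, emb, Prod.ext_iff]

lemma toTorus_cornerPoly (τ : Bool × Bool × Bool → K) :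
    toTorus K L (cornerPoly τ) = ∑ c, AddMonoidAlgebra.single (corner L c) (τ c) := by
  simp only [cornerPoly, map_sum]
  refine Finset.sum_congr rfl fun c _ => ?_
  rw [← single_eq_monomial]
  exact (AddMonoidAlgebra.mapDomain_single).trans (by rw [expToSite_cornerExp])

def cell {M : Type*} [AddCommMonoid M] (L : ℕ) (p : Site L) (τ : Bool × Bool × Bool → M) :
    Site L → M :=
  fun s => ∑ c, if s = cellSite L p c then τ c else 0

lemma cell_fst {M N : Type*} [AddCommMonoid M] [AddCommMonoid N] (p : Site L)
    (τ : Bool × Bool × Bool → M × N) (s : Site L) :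
    (cell L p τ s).1 = cell L p (fun c => (τ c).1) s := by
  simp only [cell, Prod.fst_sum, apply_ite Prod.fst, Prod.fst_zero]

lemma cell_snd {M N : Type*} [AddCommMonoid M] [AddCommMonoid N] (p : Site L)
    (τ : Bool × Bool × Bool → M × N) (s : Site L) :
    (cell L p τ s).2 = cell L p (fun c => (τ c).2) s := by
  simp only [cell, Prod.snd_sum, apply_ite Prod.snd, Prod.snd_zero]

lemma cell_eq_coeff (p : Site L) (τ : Bool × Bool × Bool → K) (s : Site L) :
    cell L p τ s = (AddMonoidAlgebra.single p 1 * toTorus K L (cornerPoly τ)).coeff s := by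
  simp only [cell, toTorus_cornerPoly, Finset.mul_sum, AddMonoidAlgebra.single_mul_single,
    one_mul, AddMonoidAlgebra.coeff_sum, Finsupp.finsetSum_apply, AddMonoidAlgebra.coeff_single,
    Finsupp.single_apply, cellSite_eq_add, eq_comm]
  rfl

lemma coeff_mul_mem_span_cell (τ : Bool × Bool × Bool → K × K) (h : AddMonoidAlgebra K (Site L)) :
    (fun s => ((h * toTorus K L (cornerPoly fun c => (τ c).1)).coeff s,
      (h * toTorus K L (cornerPoly fun c => (τ c).2)).coeff s)) ∈
      Submodule.span K (Set.range fun p => cell L p τ) := by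
  induction h using AddMonoidAlgebra.induction_linear with
  | zero =>
    convert (Submodule.span K (Set.range fun p => cell L p τ)).zero_mem using 1
    funext s
    simp
  | add x y hx hy =>
    convert Submodule.add_mem _ hx hy using 1
    funext s
    simp [add_mul]
  | single p r =>
    have hp : cell L p τ ∈ Submodule.span K (Set.range fun p => cell L p τ) :=
      Submodule.subset_span ⟨p, rfl⟩
    convert Submodule.smul_mem _ r hp using 1
    funext s
    ext <;> simp [cell_fst, cell_snd, cell_eq_coeff]

variable [NeZero L]

lemma sum_mul_cell (x : AddMonoidAlgebra K (Site L)) (p : Site L) (τ : Bool × Bool × Bool → K) :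
    ∑ s, x.coeff s * cell L p τ s =
      (x * toTorus K L (cornerPoly (τ ∘ oppCorner))).coeff (p + 1) := by
  rw [toTorus_cornerPoly, Finset.mul_sum, AddMonoidAlgebra.coeff_sum, Finsupp.finsetSum_apply,
    ← Equiv.sum_comp (oppCorner_involutive.toPerm _)]
  simp only [cell, Finset.mul_sum, mul_ite, mul_zero]
  rw [Finset.sum_comm]
  refine Finset.sum_congr rfl fun c _ => ?_
  rw [Finset.sum_ite_eq', if_pos (Finset.mem_univ _), AddMonoidAlgebra.coeff_mul_single_apply]
  simp only [Function.Involutive.coe_toPerm, Function.comp_apply, oppCorner_involutive c]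
  congr 2
  rw [cellSite_eq_add, ← corner_add_corner_oppCorner c]
  abel

end Cells

section Logical

variable {L : ℕ} [NeZero L]

lemma mul_eq_mul_of_sum_cell_eq_zero (τ : Bool × Bool × Bool → ZMod 2 × ZMod 2)
    (x y : AddMonoidAlgebra (ZMod 2) (Site L))
    (h : ∀ p, ∑ s, (x.coeff s * (cell L p τ s).1 + y.coeff s * (cell L p τ s).2) = 0) :
    x * toTorus (ZMod 2) L (cornerPoly fun c => (dualTable τ c).2) =
      y * toTorus (ZMod 2) L (cornerPoly fun c => (dualTable τ c).1) := by
  ext t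
  have ht := h (t - 1)
  simp only [Finset.sum_add_distrib, cell_fst, cell_snd, sum_mul_cell, sub_add_cancel] at ht
  exact CharTwo.add_eq_zero.mp ht

theorem mem_span_cell_dualTable_of_sum_cell_eq_zero (τ : Bool × Bool × Bool → ZMod 2 × ZMod 2)
    (hτ : IsRelPrime (cornerPoly fun c => (dualTable τ c).1)
      (cornerPoly fun c => (dualTable τ c).2))
    {u : Site L → ZMod 2 × ZMod 2} {q : Site L} (hu : Function.support u ⊆ offPlanes q)
    (horth : ∀ p, ∑ s, ((u s).1 * (cell L p τ s).1 + (u s).2 * (cell L p τ s).2) = 0) :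
    u ∈ Submodule.span (ZMod 2) (Set.range fun p => cell L p (dualTable τ)) := by
  let x : AddMonoidAlgebra (ZMod 2) (Site L) :=
    .ofCoeff (Finsupp.equivFunOnFinite.symm fun s => (u s).1)
  let y : AddMonoidAlgebra (ZMod 2) (Site L) :=
    .ofCoeff (Finsupp.equivFunOnFinite.symm fun s => (u s).2)
  have hx : (x.coeff.support : Set (Site L)) ⊆ offPlanes q := fun s hs =>
    hu fun hus => by simp [x, hus] at hs
  have hy : (y.coeff.support : Set (Site L)) ⊆ offPlanes q := fun s hs =>
    hu fun hus => by simp [y, hus] at hs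
  obtain ⟨h, hxh, hyh⟩ := exists_eq_mul_of_mul_eq_of_subset_offPlanes hτ
    (cornerPoly_mem_restrictDegree _) (cornerPoly_mem_restrictDegree _) q hx hy
    (mul_eq_mul_of_sum_cell_eq_zero τ x y (by simpa [x, y] using horth))
  convert coeff_mul_mem_span_cell (dualTable τ) h using 1
  funext s
  ext
  · simpa [x] using congrArg (fun w => w.coeff s) hxh
  · simpa [y] using congrArg (fun w => w.coeff s) hyh

end Logical

section CodePolynomials

lemma cornerPoly_z_fst :
    cornerPoly (fun c => (z c).1) = X 0 + X 1 + X 0 * X 1 + X 0 * X 1 * X 2 := by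
  simp only [cornerPoly, monomial_cornerExp, Fintype.sum_prod_type, Fintype.sum_bool, z,
    Bool.toNat_true, Bool.toNat_false, pow_one, pow_zero, map_zero, map_one]
  ring

lemma cornerPoly_z_snd :
    cornerPoly (fun c => (z c).2) = 1 + X 0 + X 1 + X 2 + X 1 * X 2 + X 0 * X 1 * X 2 := by
  simp only [cornerPoly, monomial_cornerExp, Fintype.sum_prod_type, Fintype.sum_bool, z,
    Bool.toNat_true, Bool.toNat_false, pow_one, pow_zero, map_zero, map_one]
  ring

lemma cornerPoly_dualTable_z_fst : cornerPoly (fun c => (dualTable z c).1) =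
    1 + X 0 + X 0 * X 1 + X 0 * X 2 + X 1 * X 2 + X 0 * X 1 * X 2 := by
  simp only [cornerPoly, monomial_cornerExp, Fintype.sum_prod_type, Fintype.sum_bool, dualTable,
    oppCorner, Prod.fst_swap, Bool.not_true, Bool.not_false, z, Bool.toNat_true, Bool.toNat_false,
    pow_one, pow_zero, map_zero, map_one]
  ring

lemma cornerPoly_dualTable_z_snd :
    cornerPoly (fun c => (dualTable z c).2) = 1 + X 2 + X 0 * X 2 + X 1 * X 2 := by
  simp only [cornerPoly, monomial_cornerExp, Fintype.sum_prod_type, Fintype.sum_bool, dualTable,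
    oppCorner, Prod.snd_swap, Bool.not_true, Bool.not_false, z, Bool.toNat_true, Bool.toNat_false,
    pow_one, pow_zero, map_zero, map_one]
  ring

lemma finSuccEquiv_X_one : finSuccEquiv (ZMod 2) 2 (X 1) = Polynomial.C (X 0) :=
  finSuccEquiv_X_succ (j := 0)

lemma finSuccEquiv_X_two : finSuccEquiv (ZMod 2) 2 (X 2) = Polynomial.C (X 1) :=
  finSuccEquiv_X_succ (j := 1)

lemma isRelPrime_cornerPoly_z :
    IsRelPrime (cornerPoly fun c => (z c).1) (cornerPoly fun c => (z c).2) := by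
  refine IsRelPrime.of_map (finSuccEquiv (ZMod 2) 2) ?_
  have hF : finSuccEquiv (ZMod 2) 2 (cornerPoly fun c => (z c).1) =
      Polynomial.C (1 + X 0 + X 0 * X 1) * Polynomial.X + Polynomial.C (X 0) := by
    simp only [cornerPoly_z_fst, map_add, map_mul, map_one, finSuccEquiv_X_zero,
      finSuccEquiv_X_one, finSuccEquiv_X_two]
    ring
  have hG : finSuccEquiv (ZMod 2) 2 (cornerPoly fun c => (z c).2) =
      Polynomial.C (1 + X 0 * X 1) * Polynomial.X + Polynomial.C (1 + X 0 + X 1 + X 0 * X 1) := by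
    simp only [cornerPoly_z_snd, map_add, map_mul, map_one, finSuccEquiv_X_zero,
      finSuccEquiv_X_one, finSuccEquiv_X_two]
    ring
  rw [hF, hG]
  refine Polynomial.isRelPrime_C_mul_X_add_C ⟨1, -(1 + X 1), by ring⟩ fun h => ?_
  -- the resultant has constant term `1`
  simpa using congrArg (MvPolynomial.eval 0) h

lemma isRelPrime_cornerPoly_dualTable_z :
    IsRelPrime (cornerPoly fun c => (dualTable z c).1) (cornerPoly fun c => (dualTable z c).2) := by
  refine IsRelPrime.symm (IsRelPrime.of_map (finSuccEquiv (ZMod 2) 2) ?_)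
  have hF : finSuccEquiv (ZMod 2) 2 (cornerPoly fun c => (dualTable z c).1) =
      Polynomial.C (1 + X 0 + X 1 + X 0 * X 1) * Polynomial.X + Polynomial.C (1 + X 0 * X 1) := by
    simp only [cornerPoly_dualTable_z_fst, map_add, map_mul, map_one, finSuccEquiv_X_zero,
      finSuccEquiv_X_one, finSuccEquiv_X_two]
    ring
  have hG : finSuccEquiv (ZMod 2) 2 (cornerPoly fun c => (dualTable z c).2) =
      Polynomial.C (X 1) * Polynomial.X + Polynomial.C (1 + X 1 + X 0 * X 1) := by
    simp only [cornerPoly_dualTable_z_snd, map_add, map_mul, map_one, finSuccEquiv_X_zero,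
      finSuccEquiv_X_one, finSuccEquiv_X_two]
    ring
  rw [hF, hG]
  refine Polynomial.isRelPrime_C_mul_X_add_C ⟨-(1 + X 0), 1, by ring⟩ fun h => ?_
  simpa using congrArg (MvPolynomial.eval 0) h

end CodePolynomials

section Code

variable {L : ℕ} [NeZero L]

lemma pairing_gZ (v : Pauli L) (p : Site L) :
    pairing L v (gZ L p) = ∑ s, ((v.1 s).1 * (zeta L p s).1 + (v.1 s).2 * (zeta L p s).2) := by
  simp [pairing, gZ]

lemma pairing_fX (v : Pauli L) (p : Site L) :
    pairing L v (fX L p) = ∑ s, ((v.2 s).1 * (xi L p s).1 + (v.2 s).2 * (xi L p s).2) := by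
  simp [pairing, fX]

lemma mk_mem_stab {x w : Site L → ZMod 2 × ZMod 2}
    (hx : x ∈ Submodule.span (ZMod 2) (Set.range (xi L)))
    (hw : w ∈ Submodule.span (ZMod 2) (Set.range (zeta L))) : (x, w) ∈ stab L := by
  have hX : (Submodule.span (ZMod 2) (Set.range (xi L))).map (LinearMap.inl (ZMod 2) _ _) ≤
      stab L := by
    rw [Submodule.map_span, Submodule.span_le]
    rintro _ ⟨_, ⟨p, rfl⟩, rfl⟩
    exact Submodule.subset_span ⟨p, Or.inr rfl⟩
  have hZ : (Submodule.span (ZMod 2) (Set.range (zeta L))).map (LinearMap.inr (ZMod 2) _ _) ≤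
      stab L := by
    rw [Submodule.map_span, Submodule.span_le]
    rintro _ ⟨_, ⟨p, rfl⟩, rfl⟩
    exact Submodule.subset_span ⟨p, Or.inl rfl⟩
  simpa using add_mem (hX ⟨x, hx, rfl⟩) (hZ ⟨w, hw, rfl⟩)

lemma exists_subset_offPlanes {S : Set (Site L)} (hS : S.ncard < L) : ∃ q, S ⊆ offPlanes q := by
  replace hS : S.ncard < Fintype.card (ZMod L) := (ZMod.card L).symm ▸ hS
  obtain ⟨i, hi⟩ := Set.exists_forall_ne_of_ncard_lt (fun s : Site L => s.1) hS
  obtain ⟨j, hj⟩ := Set.exists_forall_ne_of_ncard_lt (fun s : Site L => s.2.1) hS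
  obtain ⟨k, hk⟩ := Set.exists_forall_ne_of_ncard_lt (fun s : Site L => s.2.2) hS
  exact ⟨(i, j, k), fun s hs => ⟨hi s hs, hj s hs, hk s hs⟩⟩

end Code

end CubicCode3Torus

open CubicCode3Torus

theorem cubicCode3_distance_ge_L_general (L : ℕ) [NeZero L]
    (v : Pauli L)
    (hlog : ∀ p : Site L, pairing L v (gZ L p) = 0 ∧ pairing L v (fX L p) = 0)
    (hnontriv : v ∉ stab L) :
    L ≤ (support L v).ncard := by
  by_contra! hsmall
  obtain ⟨q, hq⟩ := exists_subset_offPlanes hsmall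
  -- `zeta L p` and `xi L p` are, by definition, `cell L p z` and `cell L p (dualTable z)`.
  have hX : v.1 ∈ Submodule.span (ZMod 2) (Set.range (xi L)) :=
    mem_span_cell_dualTable_of_sum_cell_eq_zero z isRelPrime_cornerPoly_dualTable_z
      (fun s hs => hq (Or.inl hs)) fun p => (pairing_gZ v p).symm.trans (hlog p).1
  have hZ : v.2 ∈ Submodule.span (ZMod 2) (Set.range (zeta L)) := by
    have := mem_span_cell_dualTable_of_sum_cell_eq_zero (dualTable z)
      (by rw [dualTable_dualTable]; exact isRelPrime_cornerPoly_z)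
      (fun s hs => hq (Or.inr hs)) fun p => (pairing_fX v p).symm.trans (hlog p).2
    rwa [dualTable_dualTable] at this
  exact hnontriv (mk_mem_stab hX hZ)

/-- Every nontrivial logical operator of Cubic Code 3 on the torus `(ZMod L)³`
has support of size at least `L`. -/
theorem cubicCode3_distance_ge_L (L : ℕ) [NeZero L] (hL : 2 ≤ L)
    (v : Pauli L)
    (hlog : ∀ p : Site L, pairing L v (gZ L p) = 0 ∧ pairing L v (fX L p) = 0)
    (hnontriv : v ∉ stab L) :
    L ≤ (support L v).ncard :=
  cubicCode3_distance_ge_L_general L v hlog hnontriv
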